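/- arXiv:2506.16121 — 2 statements merged into one kernel-verified Lean document; each statement's English description precedes it below -/
import Mathlib

section
/- Let (S, C) be an instance with S = (U_S, V_S), C = (U_C, V_C), and suppose the subgraph induced by S has at most k non-edges, i.e., |Ē_S| ≤ k. For w ∈ U_C let d̄_S(w) = |{v ∈ V_S : (w, v) ∉ E}| and define d̄_S on V_C symmetrically; let σ(i) be the sum of the i smallest values of d̄_S over U_C and τ(j) the sum of the j smallest values of d̄_S over V_C. For each i ∈ {0, …, |U_C|} with σ(i) ≤ k − |Ē_S|, let j_i be the largest j ∈ {0, …, |V_C|} with σ(i) + τ(j) ≤ k − |Ē_S|. Then every k-defective biclique D = (U_D, V_D, E_D) with U_S ⊆ U_D ⊆ U_S ∪ U_C and V_S ⊆ V_D ⊆ V_S ∪ V_C satisfies |E_D| ≤ max over such i of [(|U_S| + i)·(|V_S| + j_i) − |Ē_S| − σ(i) − τ(j_i)]. -/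
/-!
Put `X = U_D \ U_S` and `Y = V_D \ V_S`. The non-edges of `D` contain those of `S`, the
non-neighbours in `V_S` of the vertices of `X` and the non-neighbours in `U_S` of the vertices
of `Y`; the last two counts are at least `σ(|X|)` and `τ(|Y|)`. Hence `|X|` is admissible and
`|Y| ≤ j_{|X|}`, and `|E_D| ≤ (|U_S| + |X|)(|V_S| + |Y|) − |Ē_S| − σ(|X|) − τ(|Y|)`. This bound
only grows when `|Y|` is raised to `j_{|X|}`: each step adds `|U_S| + |X|` pairs, while `τ`
grows by a single `d̄_S`-value, which is at most `|U_S|`.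
-/

/-- The number of non-neighbors of `w ∈ U` in `V_S` (with respect to the edge set `E`). -/
def dbarU {α β : Type*} [DecidableEq α] [DecidableEq β]
    (E : Finset (α × β)) (VS : Finset β) (w : α) : ℕ :=
  (VS.filter (fun v => (w, v) ∉ E)).card

/-- The number of non-neighbors of `w ∈ V` in `U_S` (with respect to the edge set `E`). -/
def dbarV {α β : Type*} [DecidableEq α] [DecidableEq β]
    (E : Finset (α × β)) (US : Finset α) (w : β) : ℕ :=
  (US.filter (fun u => (u, w) ∉ E)).card

/-- The sum of the `i` smallest values (with multiplicity) of `f` over the finset `s`. -/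
def smallSum {γ : Type*} (s : Finset γ) (f : γ → ℕ) (i : ℕ) : ℕ :=
  (((s.val.map f).sort (· ≤ ·)).take i).sum

open Finset

namespace List

variable {M : Type*} [AddCommMonoid M] [PartialOrder M] [IsOrderedAddMonoid M]

theorem sum_take_cons_le_sum_take {a : M} {L : List M} (ha : ∀ b ∈ L, a ≤ b) {m : ℕ}
    (hm : m ≤ L.length) : ((a :: L).take m).sum ≤ (L.take m).sum := by
  cases m with
  | zero => simp
  | succ n =>
    rw [take_succ_cons, sum_cons, sum_take_succ L n hm, add_comm]
    exact add_le_add_right (ha _ (getElem_mem _)) _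

theorem Sublist.sum_take_length_le {S L : List M} (h : S <+ L) (hL : L.Pairwise (· ≤ ·)) :
    (L.take S.length).sum ≤ S.sum := by
  induction h with
  | slnil => simp
  | @cons S L a h ih =>
    rw [pairwise_cons] at hL
    exact (sum_take_cons_le_sum_take hL.1 h.length_le).trans (ih hL.2)
  | cons_cons a _ ih =>
    rw [pairwise_cons] at hL
    simp only [length_cons, take_succ_cons, sum_cons]
    gcongr
    exact ih hL.2

end List

section SmallSum

variable {γ : Type*} (s : Finset γ) (f : γ → ℕ)

theorem smallSum_card_le_sum {t : Finset γ} (ht : t ⊆ s) :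
    smallSum s f #t ≤ ∑ x ∈ t, f x := by
  have hsub : ((t.val.map f).sort (· ≤ ·)).Sublist ((s.val.map f).sort (· ≤ ·)) := by
    refine List.sublist_of_subperm_of_pairwise ?_ (Multiset.pairwise_sort _ _)
      (Multiset.pairwise_sort _ _)
    rw [← Multiset.coe_le, Multiset.sort_eq, Multiset.sort_eq]
    exact Multiset.map_le_map (val_le_iff.mpr ht)
  calc smallSum s f #t
      = (((s.val.map f).sort (· ≤ ·)).take ((t.val.map f).sort (· ≤ ·)).length).sum := by
        rw [smallSum, Multiset.length_sort, Multiset.card_map]; rfl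
    _ ≤ ((t.val.map f).sort (· ≤ ·)).sum := hsub.sum_take_length_le (Multiset.pairwise_sort _ _)
    _ = ∑ x ∈ t, f x := by rw [← Multiset.sum_coe, Multiset.sort_eq]; rfl

variable {s f}

theorem smallSum_succ_le {B : ℕ} (hB : ∀ x ∈ s, f x ≤ B) (n : ℕ) :
    smallSum s f (n + 1) ≤ smallSum s f n + B := by
  rw [smallSum, smallSum, List.take_add_one, List.sum_append]
  gcongr
  cases hx : ((s.val.map f).sort (· ≤ ·))[n]? with
  | none => simp
  | some x =>
    obtain ⟨y, hy, rfl⟩ := Multiset.mem_map.mp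
      ((Multiset.mem_sort _).mp (List.mem_of_getElem? hx))
    simpa using hB y hy

theorem monotone_mul_sub_smallSum {a : ℕ} (ha : ∀ x ∈ s, f x ≤ a) (b : ℕ) :
    Monotone fun n : ℕ => (a : ℤ) * (b + n) - smallSum s f n := by
  refine monotone_nat_of_le_succ fun n => ?_
  have := smallSum_succ_le ha n
  push_cast
  linarith

end SmallSum

section NonEdges

variable {α β : Type*} [DecidableEq α] [DecidableEq β] (E : Finset (α × β))

theorem card_sdiff_product_eq_sum_dbarU (A : Finset α) (B : Finset β) :
    #((A ×ˢ B) \ E) = ∑ u ∈ A, dbarU E B u := by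
  simp only [sdiff_eq_filter, card_filter, sum_product, dbarU]

theorem card_sdiff_product_eq_sum_dbarV (A : Finset α) (B : Finset β) :
    #((A ×ˢ B) \ E) = ∑ v ∈ B, dbarV E A v := by
  simp only [sdiff_eq_filter, card_filter, sum_product_right, dbarV]

theorem dbarU_mono {B B' : Finset β} (h : B ⊆ B') (u : α) : dbarU E B u ≤ dbarU E B' u :=
  card_le_card (filter_subset_filter _ h)

theorem card_sdiff_product_add_sum_dbar_le {A A' : Finset α} {B B' : Finset β}
    (hA : A ⊆ A') (hB : B ⊆ B') :
    #((A ×ˢ B) \ E) + ∑ u ∈ A' \ A, dbarU E B u + ∑ v ∈ B' \ B, dbarV E A v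
      ≤ #((A' ×ˢ B') \ E) := by
  have hrows : #((A' ×ˢ B') \ E) = ∑ u ∈ A' \ A, dbarU E B' u + #((A ×ˢ B') \ E) := by
    rw [card_sdiff_product_eq_sum_dbarU, card_sdiff_product_eq_sum_dbarU, sum_sdiff hA]
  have hcols : #((A ×ˢ B') \ E) = ∑ v ∈ B' \ B, dbarV E A v + #((A ×ˢ B) \ E) := by
    rw [card_sdiff_product_eq_sum_dbarV, card_sdiff_product_eq_sum_dbarV, sum_sdiff hB]
  have hmono : ∑ u ∈ A' \ A, dbarU E B u ≤ ∑ u ∈ A' \ A, dbarU E B' u :=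
    sum_le_sum fun u _ => dbarU_mono E hB u
  omega

end NonEdges

theorem edge_upper_bound_general {α β : Type*} [DecidableEq α] [DecidableEq β]
    (E : Finset (α × β)) (k : ℕ)
    (US UC : Finset α) (VS VC : Finset β)
    (j : ℕ → ℕ)
    (hj : ∀ i ≤ UC.card,
      smallSum UC (dbarU E VS) i ≤ k - ((US ×ˢ VS) \ E).card →
      (j i ≤ VC.card ∧
       smallSum UC (dbarU E VS) i + smallSum VC (dbarV E US) (j i)
          ≤ k - ((US ×ˢ VS) \ E).card ∧
       ∀ j' ≤ VC.card,
         smallSum UC (dbarU E VS) i + smallSum VC (dbarV E US) j'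
            ≤ k - ((US ×ˢ VS) \ E).card → j' ≤ j i))
    (UD : Finset α) (VD : Finset β)
    (hU1 : US ⊆ UD) (hU2 : UD ⊆ US ∪ UC) (hV1 : VS ⊆ VD) (hV2 : VD ⊆ VS ∪ VC)
    (hdef : ((UD ×ˢ VD) \ E).card ≤ k) :
    ∃ i ≤ UC.card,
      smallSum UC (dbarU E VS) i ≤ k - ((US ×ˢ VS) \ E).card ∧
      (((UD ×ˢ VD) ∩ E).card : ℤ) ≤
        ((US.card : ℤ) + i) * ((VS.card : ℤ) + j i)
          - ((US ×ˢ VS) \ E).card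
          - smallSum UC (dbarU E VS) i - smallSum VC (dbarV E US) (j i) := by
  have hnon := card_sdiff_product_add_sum_dbar_le E hU1 hV1
  set X := UD \ US
  set Y := VD \ VS
  have hXC : X ⊆ UC := sdiff_le_iff.mpr hU2
  have hYC : Y ⊆ VC := sdiff_le_iff.mpr hV2
  have hσ := smallSum_card_le_sum UC (dbarU E VS) hXC
  have hτ := smallSum_card_le_sum VC (dbarV E US) hYC
  have hbudget : smallSum UC (dbarU E VS) #X + smallSum VC (dbarV E US) #Y
      ≤ k - #((US ×ˢ VS) \ E) := by omega
  obtain ⟨-, -, hmax⟩ := hj #X (card_le_card hXC) (by omega)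
  have hYj : #Y ≤ j #X := hmax #Y (card_le_card hYC) hbudget
  have hpairs : #((UD ×ˢ VD) ∩ E) + #((UD ×ˢ VD) \ E) = (#US + #X) * (#VS + #Y) := by
    rw [card_inter_add_card_sdiff, card_product, ← card_sdiff_add_card_eq_card hU1,
      ← card_sdiff_add_card_eq_card hV1, add_comm #X, add_comm #Y]
  have hedges : #((UD ×ˢ VD) ∩ E) + (#((US ×ˢ VS) \ E) + smallSum UC (dbarU E VS) #X
      + smallSum VC (dbarV E US) #Y) ≤ (#US + #X) * (#VS + #Y) := by omega
  have hgrow := monotone_mul_sub_smallSum (s := VC) (f := dbarV E US) (a := #US + #X)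
    (fun _ _ => (card_filter_le _ _).trans (Nat.le_add_right _ _)) #VS hYj
  refine ⟨#X, card_le_card hXC, by omega, ?_⟩
  zify at hedges
  push_cast at hgrow
  linarith

/-- edge upper bound. With `σ(i)` (resp. `τ(j)`) the sum of the `i` (resp. `j`)
smallest values of `d̄_S` over `U_C` (resp. `V_C`), and `j i` the largest `j ≤ |V_C|` with
`σ(i) + τ(j) ≤ k − |Ē_S|`, every `k`-defective biclique `D` between `S` and `S ∪ C` has
`|E_D|` at most the maximum over valid `i` of
`(|U_S| + i)·(|V_S| + j i) − |Ē_S| − σ(i) − τ(j i)`. -/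
theorem edge_upper_bound {α β : Type*} [DecidableEq α] [DecidableEq β]
    (E : Finset (α × β)) (k : ℕ)
    (US UC : Finset α) (VS VC : Finset β)
    (hUdisj : Disjoint US UC) (hVdisj : Disjoint VS VC)
    (hES : ((US ×ˢ VS) \ E).card ≤ k)
    (j : ℕ → ℕ)
    (hj : ∀ i ≤ UC.card,
      smallSum UC (dbarU E VS) i ≤ k - ((US ×ˢ VS) \ E).card →
      (j i ≤ VC.card ∧
       smallSum UC (dbarU E VS) i + smallSum VC (dbarV E US) (j i)
          ≤ k - ((US ×ˢ VS) \ E).card ∧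
       ∀ j' ≤ VC.card,
         smallSum UC (dbarU E VS) i + smallSum VC (dbarV E US) j'
            ≤ k - ((US ×ˢ VS) \ E).card → j' ≤ j i))
    (UD : Finset α) (VD : Finset β)
    (hU1 : US ⊆ UD) (hU2 : UD ⊆ US ∪ UC) (hV1 : VS ⊆ VD) (hV2 : VD ⊆ VS ∪ VC)
    (hdef : ((UD ×ˢ VD) \ E).card ≤ k) :
    ∃ i ≤ UC.card,
      smallSum UC (dbarU E VS) i ≤ k - ((US ×ˢ VS) \ E).card ∧
      (((UD ×ˢ VD) ∩ E).card : ℤ) ≤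
        ((US.card : ℤ) + i) * ((VS.card : ℤ) + j i)
          - ((US ×ˢ VS) \ E).card
          - smallSum UC (dbarU E VS) i - smallSum VC (dbarV E US) (j i) :=
  edge_upper_bound_general E k US UC VS VC j hj UD VD hU1 hU2 hV1 hV2 hdef
end

section
/- For every integer k ≥ 1 and every real x > 1, q_k(x) − p_k(x) = x^{k+3} − x^3 + (x − 1)^2 > 0, where p_k(x) = x^{2k+5} − 2x^{2k+4} + x^3 − x^2 + 1 and q_k(x) = x^{2k+5} − 2x^{2k+4} + x^{k+3} − 2x + 2. Consequently, if α > 1 is a real number with p_k(x) ≥ 0 for all x ≥ α, then q_k(x) > 0 for all x ≥ α; in particular every real root of q_k exceeding 1 is strictly smaller than the largest real root α_k of p_k, i.e., β_k < α_k. -/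
/-- The characteristic polynomial of the branch-and-bound recurrence. -/
noncomputable def pPoly (k : ℕ) (x : ℝ) : ℝ :=
  x ^ (2 * k + 5) - 2 * x ^ (2 * k + 4) + x ^ 3 - x ^ 2 + 1

/-- The characteristic polynomial of the pivoting-based recurrence. -/
noncomputable def qPoly (k : ℕ) (x : ℝ) : ℝ :=
  x ^ (2 * k + 5) - 2 * x ^ (2 * k + 4) + x ^ (k + 3) - 2 * x + 2

lemma qp_diff (k : ℕ) (x : ℝ) :
    qPoly k x - pPoly k x = x ^ (k + 3) - x ^ 3 + (x - 1) ^ 2 := by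
  unfold qPoly pPoly; ring

lemma qp_diff_pos (k : ℕ) (hk : 1 ≤ k) {x : ℝ} (hx : 1 < x) :
    0 < qPoly k x - pPoly k x := by
  rw [qp_diff]
  have h3 : (3 : ℕ) < k + 3 := by omega
  have hlt : x ^ 3 < x ^ (k + 3) := pow_lt_pow_right₀ hx h3
  nlinarith [sq_nonneg (x - 1)]

lemma pPoly_cont (k : ℕ) : Continuous (pPoly k) := by
  unfold pPoly; continuity

lemma pPoly_pos_of_two_le (k : ℕ) {x : ℝ} (hx : 2 ≤ x) : 0 < pPoly k x := by
  unfold pPoly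
  have h1 : (1:ℝ) ≤ x := by linarith
  have h2 : (0:ℝ) ≤ x ^ (2 * k + 4) := by positivity
  have hxx : x ^ (2 * k + 5) = x ^ (2 * k + 4) * x := by ring
  have h4 : x ^ (2 * k + 4) * (x - 2) ≥ 0 := by nlinarith
  have h5 : x ^ 2 ≤ x ^ 3 := pow_le_pow_right₀ h1 (by omega)
  nlinarith

/-- for every `k ≥ 1` and real `x > 1`,
`q_k(x) − p_k(x) = x^(k+3) − x^3 + (x−1)^2 > 0`; consequently if `p_k(x) ≥ 0` for all
`x ≥ α` with `α > 1` then `q_k(x) > 0` for all `x ≥ α`, and every real root of `q_k`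
exceeding 1 is strictly smaller than the largest real root `α_k` of `p_k`. -/
theorem qPoly_roots_lt_pPoly_largest_root (k : ℕ) (hk : 1 ≤ k) :
    (∀ x : ℝ, 1 < x →
      qPoly k x - pPoly k x = x ^ (k + 3) - x ^ 3 + (x - 1) ^ 2 ∧
      0 < qPoly k x - pPoly k x) ∧
    (∀ α : ℝ, 1 < α → (∀ x : ℝ, α ≤ x → 0 ≤ pPoly k x) →
      ∀ x : ℝ, α ≤ x → 0 < qPoly k x) ∧
    (∀ αk : ℝ, pPoly k αk = 0 → (∀ x : ℝ, pPoly k x = 0 → x ≤ αk) →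
      ∀ β : ℝ, 1 < β → qPoly k β = 0 → β < αk) := by
  refine ⟨fun x hx => ⟨qp_diff k x, qp_diff_pos k hk hx⟩, ?_, ?_⟩
  · intro α hα hp x hx
    have h1 : 1 < x := lt_of_lt_of_le hα hx
    have := qp_diff_pos k hk h1
    have := hp x hx
    linarith
  · intro αk hroot hmax β hβ hq
    have hpβ : pPoly k β < 0 := by
      have := qp_diff_pos k hk hβ
      linarith
    have hβ2 : β < 2 := by
      by_contra h
      push_neg at h
      exact absurd hpβ (not_lt.mpr (pPoly_pos_of_two_le k h).le)
    have hcont : ContinuousOn (pPoly k) (Set.Icc β 2) := (pPoly_cont k).continuousOn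
    have h2pos : 0 < pPoly k 2 := pPoly_pos_of_two_le k le_rfl
    have hmem : (0:ℝ) ∈ Set.Ioo (pPoly k β) (pPoly k 2) := ⟨hpβ, h2pos⟩
    obtain ⟨r, hrmem, hr⟩ := intermediate_value_Ioo hβ2.le hcont hmem
    have : r ≤ αk := hmax r hr
    exact lt_of_lt_of_le hrmem.1 this
end
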